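/- In the preferential attachment multigraph growth model with parameter θ > 0 on n vertices, conditional on the degree sequence D*(m) = d (with Σ_i d_i = 2m), the multigraph H(m) is distributed as the configuration model CM(d). Equivalently, ℙ[H(m) = G] = (Π_{i=1}^n θ^{(d_i)} / (nθ)^{(2m)}) · (2m)!! / (Π_{1≤i<j≤n} x_{ij}! Π_{i} x_{ii}!!) for every multigraph G = (x_{ij}) with degree sequence d. -/

import Mathlib

/-!
Induction on `m`. In one step `x` can only arise from `x - e` with `e` one of its edges, so it
suffices that the closed form `f` obeys the recursion of the growth model. Adding an edge `ij`
(`i ≤ j`) to `r` multiplies the rising factorials by exactly the numerator of the step probability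
and the multiplicity factor by the number `c` of `ij`-edges of the new graph (by `2c` for a loop),
whence `f m r * stepProb = f (m+1) (r + e) * c / (m+1)`; the `c` over all pairs add up to `m+1`.
-/

open Finset Nat

/-- Rising factorial `x^{(k)} = x (x+1) ⋯ (x+k-1)` for real `x`. -/
noncomputable def riseR (x : ℝ) (k : ℕ) : ℝ := ∏ i ∈ Finset.range k, (x + i)

/-- Degree of vertex `i` in the multigraph with adjacency matrix `G`
(a loop at `i` contributes `2` via the diagonal entry). -/
def deg {n : ℕ} (G : Fin n → Fin n → ℕ) (i : Fin n) : ℕ := ∑ j, G i j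

/-- Add an edge between `i` and `j` (a loop if `i = j`, raising the diagonal
entry by `2`). -/
def addEdge {n : ℕ} (G : Fin n → Fin n → ℕ) (i j : Fin n) : Fin n → Fin n → ℕ :=
  fun p q => G p q + (if (p = i ∧ q = j) ∨ (p = j ∧ q = i) then 1 else 0) +
    (if i = j ∧ p = i ∧ q = i then 1 else 0)

/-- Probability of attaching the new edge at the pair `(i,j)` when the current
graph `G` has `2m` half-edges, in the preferential attachment growth model. -/
noncomputable def stepProb {n : ℕ} (θ : ℝ) (m : ℕ) (G : Fin n → Fin n → ℕ)
    (i j : Fin n) : ℝ :=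
  if i = j then
    ((deg G i : ℝ) + θ) * ((deg G i : ℝ) + θ + 1) /
      ((2 * m + n * θ) * (2 * m + n * θ + 1))
  else
    2 * ((deg G i : ℝ) + θ) * ((deg G j : ℝ) + θ) /
      ((2 * m + n * θ) * (2 * m + n * θ + 1))

/-- `P` is the law of the preferential attachment multigraph growth model:
`P m G` is the probability that the graph after `m` steps equals `G`. -/
def IsGrowthLaw {n : ℕ} (θ : ℝ) (P : ℕ → (Fin n → Fin n → ℕ) → ℝ) : Prop :=
  (∀ G, P 0 G = if G = fun _ _ => 0 then 1 else 0) ∧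
  ∀ m G', P (m + 1) G' =
    ∑' G : Fin n → Fin n → ℕ, P m G *
      ∑ i, ∑ j, (if i ≤ j ∧ G' = addEdge G i j then stepProb θ m G i j else 0)

lemma riseR_add (x : ℝ) (a b : ℕ) : riseR x (a + b) = riseR x a * riseR (x + a) b := by
  simp only [riseR, prod_range_add, Nat.cast_add, add_assoc]

lemma riseR_two (x : ℝ) : riseR x 2 = x * (x + 1) := by
  simp [riseR, prod_range_succ]

lemma riseR_ite_one (x : ℝ) (p : Prop) [Decidable p] :
    riseR x (if p then 1 else 0) = if p then x else 1 := by
  split_ifs <;> simp [riseR]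

lemma prod_eq_prod_mul_of_eq_mul_ite {ι M : Type*} [Fintype ι] [DecidableEq ι] [CommMonoid M]
    {f g : ι → M} (i : ι) (c : M) (h : ∀ k, f k = g k * if k = i then c else 1) :
    ∏ k, f k = (∏ k, g k) * c := by
  simp only [h, prod_mul_distrib, prod_ite_eq', mem_univ, if_true]

section
variable {n : ℕ}

def singleEdge (i j : Fin n) : Fin n → Fin n → ℕ := fun p q =>
  (if (p = i ∧ q = j) ∨ (p = j ∧ q = i) then 1 else 0) + (if i = j ∧ p = i ∧ q = i then 1 else 0)

lemma addEdge_eq_add (G : Fin n → Fin n → ℕ) (i j : Fin n) :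
    addEdge G i j = G + singleEdge i j := by
  funext p q
  simp only [addEdge, singleEdge, Pi.add_apply, add_assoc]

lemma eq_addEdge_iff {x G : Fin n → Fin n → ℕ} {i j : Fin n} :
    x = addEdge G i j ↔ G = x - singleEdge i j ∧ singleEdge i j ≤ x := by
  rw [addEdge_eq_add]
  constructor
  · rintro rfl
    exact ⟨(add_tsub_cancel_right G _).symm, le_add_self⟩
  · rintro ⟨rfl, h⟩
    exact (tsub_add_cancel_of_le h).symm

lemma singleEdge_symm (i j p q : Fin n) : singleEdge i j p q = singleEdge i j q p := by
  unfold singleEdge; grind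

lemma singleEdge_diag (i j p : Fin n) :
    singleEdge i j p p = if i = j ∧ p = i then 2 else 0 := by
  unfold singleEdge; grind

lemma singleEdge_self (i p q : Fin n) :
    singleEdge i i p q = if p = i ∧ q = i then 2 else 0 := by
  unfold singleEdge; grind

lemma singleEdge_of_lt {i j p q : Fin n} (hij : i < j) :
    singleEdge i j p q = if (p = i ∧ q = j) ∨ (p = j ∧ q = i) then 1 else 0 := by
  unfold singleEdge; grind

lemma singleEdge_of_lt_of_le {i j p q : Fin n} (hij : i ≤ j) (hpq : p < q) :
    singleEdge i j p q = if p = i ∧ q = j then 1 else 0 := by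
  unfold singleEdge; grind

lemma deg_singleEdge (i j k : Fin n) :
    deg (singleEdge i j) k = (if k = i then 1 else 0) + (if k = j then 1 else 0) := by
  have h : ∀ q, singleEdge i j k q =
      (if k = i ∧ q = j then 1 else 0) + (if k = j ∧ q = i then 1 else 0) := by
    intro q; unfold singleEdge; grind
  simp [deg, h, sum_add_distrib, ite_and]

lemma deg_add (G H : Fin n → Fin n → ℕ) (k : Fin n) : deg (G + H) k = deg G k + deg H k :=
  sum_add_distrib

def multiplicityFactor (x : Fin n → Fin n → ℕ) : ℝ :=
  (∏ i, ∏ j, if i < j then ((x i j)! : ℝ) else 1) * ∏ i, ((x i i)‼ : ℝ)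

noncomputable def closedForm (θ : ℝ) (m : ℕ) (x : Fin n → Fin n → ℕ) : ℝ :=
  ((∏ i, riseR θ (deg x i)) / riseR (n * θ) (2 * m)) * (((2 * m)‼ : ℝ) / multiplicityFactor x)

-- the number of edges joining `i ≤ j`; a loop contributes `2` to the diagonal entry
noncomputable def pairCount (x : Fin n → Fin n → ℕ) (i j : Fin n) : ℝ :=
  if i < j then x i j else if i = j then x i i / 2 else 0

lemma prod_riseR_deg_add_singleEdge (θ : ℝ) (G : Fin n → Fin n → ℕ) (i j : Fin n) :
    ∏ k, riseR θ (deg (G + singleEdge i j) k) =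
      (∏ k, riseR θ (deg G k)) * ((θ + deg G i) * (θ + deg G j + if j = i then 1 else 0)) := by
  have h : ∀ k, riseR θ (deg (G + singleEdge i j) k) = riseR θ (deg G k) *
      riseR (θ + deg G k) (if k = i then 1 else 0) *
      riseR (θ + deg G k + (if k = i then 1 else 0 : ℕ)) (if k = j then 1 else 0) := by
    intro k
    rw [deg_add, deg_singleEdge, ← add_assoc, riseR_add, riseR_add, Nat.cast_add, add_assoc]
  simp_rw [h, prod_mul_distrib, riseR_ite_one, prod_ite_eq', mem_univ, if_true, Nat.cast_ite,
    Nat.cast_one, Nat.cast_zero, mul_assoc]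

lemma multiplicityFactor_add_singleEdge (r : Fin n → Fin n → ℕ) {i j : Fin n} (hij : i ≤ j) :
    multiplicityFactor (r + singleEdge i j) =
      multiplicityFactor r * ((if i = j then r i i + 2 else r i j + 1 : ℕ) : ℝ) := by
  have hoff : (∏ p, ∏ q, if p < q then (((r + singleEdge i j) p q)! : ℝ) else 1) =
      (∏ p, ∏ q, if p < q then ((r p q)! : ℝ) else 1) *
        ((if i < j then r i j + 1 else 1 : ℕ) : ℝ) := by
    rw [← Fintype.prod_prod_type', ← Fintype.prod_prod_type']
    refine prod_eq_prod_mul_of_eq_mul_ite (i, j) _ fun ⟨p, q⟩ => ?_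
    simp only [Pi.add_apply, Prod.mk.injEq]
    by_cases hpq : p < q
    · rw [singleEdge_of_lt_of_le hij hpq]
      by_cases he : p = i ∧ q = j
      · obtain ⟨rfl, rfl⟩ := he
        simp [hpq, Nat.factorial_succ, mul_comm]
      · simp [hpq, he]
    · rw [if_neg hpq, if_neg hpq, one_mul]
      by_cases he : p = i ∧ q = j
      · obtain ⟨rfl, rfl⟩ := he
        rw [if_pos ⟨rfl, rfl⟩, if_neg hpq, Nat.cast_one]
      · rw [if_neg he]
  have hdiag : (∏ p, (((r + singleEdge i j) p p)‼ : ℝ)) =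
      (∏ p, ((r p p)‼ : ℝ)) * ((if i = j then r i i + 2 else 1 : ℕ) : ℝ) := by
    refine prod_eq_prod_mul_of_eq_mul_ite i _ fun p => ?_
    simp only [Pi.add_apply]
    rw [singleEdge_diag]
    by_cases he : i = j ∧ p = i
    · obtain ⟨rfl, rfl⟩ := he
      simp [mul_comm]
    · rw [if_neg he, add_zero]
      by_cases hp : p = i
      · rw [if_pos hp, if_neg fun h => he ⟨h, hp⟩, Nat.cast_one, mul_one]
      · rw [if_neg hp, mul_one]
  rw [multiplicityFactor, multiplicityFactor, hoff, hdiag]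
  rcases hij.lt_or_eq with h | rfl
  · simp only [h, h.ne, ↓reduceIte, Nat.cast_add, Nat.cast_one, mul_one]
    ring
  · simp only [lt_self_iff_false, ↓reduceIte, Nat.cast_one, mul_one]
    ring

lemma closedForm_mul_stepProb (θ : ℝ) (m : ℕ) (r : Fin n → Fin n → ℕ) {i j : Fin n}
    (hij : i ≤ j) :
    closedForm θ m r * stepProb θ m r i j =
      closedForm θ (m + 1) (r + singleEdge i j) * (pairCount (r + singleEdge i j) i j / (m + 1)) := by
  have hB : riseR (n * θ) (2 * (m + 1)) =
      riseR (n * θ) (2 * m) * ((2 * m + n * θ) * (2 * m + n * θ + 1)) := by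
    rw [mul_add, mul_one, riseR_add, riseR_two]; push_cast; ring
  have hD : (((2 * (m + 1))‼ : ℕ) : ℝ) = (2 * m + 2) * (2 * m)‼ := by
    rw [mul_add, mul_one, Nat.doubleFactorial_add_two]; push_cast; ring
  have hm : (m + 1 : ℝ) ≠ 0 := by positivity
  rw [closedForm, closedForm, prod_riseR_deg_add_singleEdge, multiplicityFactor_add_singleEdge r hij,
    hB, hD, stepProb]
  rcases hij.lt_or_eq with h | rfl
  · have hx : (r i j + 1 : ℝ) ≠ 0 := by positivity
    simp only [pairCount, h, h.ne, h.ne', ↓reduceIte, Pi.add_apply, singleEdge_of_lt h, and_self,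
      or_false, add_zero, Nat.cast_add, Nat.cast_one]
    field_simp
    ring
  · have hx : (r i i + 2 : ℝ) ≠ 0 := by positivity
    simp only [pairCount, lt_self_iff_false, ↓reduceIte, Pi.add_apply, singleEdge_self, and_self,
      Nat.cast_add, Nat.cast_ofNat]
    field_simp
    ring

lemma two_mul_sum_pairCount {x : Fin n → Fin n → ℕ} (hsym : ∀ i j, x i j = x j i) :
    2 * ∑ i, ∑ j, pairCount x i j = ∑ i, (deg x i : ℝ) := by
  have h : ∀ i j, (x i j : ℝ) = pairCount x i j + pairCount x j i := by
    intro i j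
    rcases lt_trichotomy i j with hij | rfl | hji
    · simp [pairCount, hij, hij.ne', asymm hij]
    · simp [pairCount]
    · simp [pairCount, hji, hji.ne', asymm hji, hsym i j]
  simp only [deg, Nat.cast_sum, h, sum_add_distrib]
  rw [sum_comm (f := fun i j => pairCount x j i)]
  ring

lemma pairCount_eq_zero {x : Fin n → Fin n → ℕ} (hsym : ∀ i j, x i j = x j i)
    (heven : ∀ i, Even (x i i)) {i j : Fin n} (h : ¬(i ≤ j ∧ singleEdge i j ≤ x)) :
    pairCount x i j = 0 := by
  by_contra h0
  have hij : i ≤ j := by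
    by_contra hji
    simp [pairCount, (not_le.1 hji).ne', not_lt_of_ge (not_le.1 hji).le] at h0
  refine h ⟨hij, fun p q => ?_⟩
  change singleEdge i j p q ≤ x p q
  rcases hij.lt_or_eq with hij | rfl
  · have hx : x i j ≠ 0 := by simpa [pairCount, hij] using h0
    rw [singleEdge_of_lt hij]
    split_ifs with he
    · rcases he with ⟨rfl, rfl⟩ | ⟨rfl, rfl⟩ <;> grind
    · exact Nat.zero_le _
  · have hx : x i i ≠ 0 := by simpa [pairCount] using h0
    rw [singleEdge_self]
    split_ifs with he
    · rw [he.1, he.2]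
      obtain ⟨c, hc⟩ := heven i
      omega
    · exact Nat.zero_le _

lemma symm_of_add_singleEdge {r : Fin n → Fin n → ℕ} {i j : Fin n}
    (h : ∀ p q, (r + singleEdge i j) p q = (r + singleEdge i j) q p) (p q : Fin n) :
    r p q = r q p := by
  simpa [singleEdge_symm i j p q] using h p q

lemma even_of_add_singleEdge {r : Fin n → Fin n → ℕ} {i j : Fin n}
    (h : ∀ p, Even ((r + singleEdge i j) p p)) (p : Fin n) : Even (r p p) := by
  refine (Nat.even_add.1 (h p)).2 ?_
  rw [singleEdge_diag]
  split_ifs <;> simp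

lemma sum_deg_add_singleEdge (r : Fin n → Fin n → ℕ) (i j : Fin n) :
    ∑ k, deg (r + singleEdge i j) k = ∑ k, deg r k + 2 := by
  simp [deg_add, deg_singleEdge, sum_add_distrib]

namespace IsGrowthLaw

variable {θ : ℝ} {P : ℕ → (Fin n → Fin n → ℕ) → ℝ}

open scoped Classical in
lemma apply_succ (hP : IsGrowthLaw θ P) (m : ℕ) (x : Fin n → Fin n → ℕ) :
    P (m + 1) x = ∑ i, ∑ j, if i ≤ j ∧ singleEdge i j ≤ x then
      P m (x - singleEdge i j) * stepProb θ m (x - singleEdge i j) i j else 0 := by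
  have h : ∀ G, P m G *
      ∑ i, ∑ j, (if i ≤ j ∧ x = addEdge G i j then stepProb θ m G i j else 0) =
      ∑ i, ∑ j, if G = x - singleEdge i j then (if i ≤ j ∧ singleEdge i j ≤ x then
        P m (x - singleEdge i j) * stepProb θ m (x - singleEdge i j) i j else 0) else 0 := by
    intro G
    simp only [mul_sum]
    refine sum_congr rfl fun i _ => sum_congr rfl fun j _ => ?_
    by_cases hG : G = x - singleEdge i j
    · subst hG
      simp [eq_addEdge_iff]
    · simp [eq_addEdge_iff, hG]
  rw [hP.2, tsum_congr h]
  exact (hasSum_sum fun i _ => hasSum_sum fun j _ => hasSum_ite_eq _ _).tsum_eq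

open scoped Classical in
theorem apply_eq_closedForm (hP : IsGrowthLaw θ P) (m : ℕ) (x : Fin n → Fin n → ℕ)
    (hsym : ∀ i j, x i j = x j i) (heven : ∀ i, Even (x i i)) (hdeg : ∑ k, deg x k = 2 * m) :
    P m x = closedForm θ m x := by
  induction m generalizing x with
  | zero =>
    have hx : x = fun _ _ => 0 := by
      funext p q
      simp only [Nat.mul_zero, sum_eq_zero_iff, mem_univ, true_imp_iff, deg] at hdeg
      exact hdeg p q
    subst hx
    rw [hP.1, if_pos rfl]
    simp [closedForm, multiplicityFactor, riseR, deg]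
  | succ m ih =>
    have hterm : ∀ i j, (if i ≤ j ∧ singleEdge i j ≤ x then
        P m (x - singleEdge i j) * stepProb θ m (x - singleEdge i j) i j else 0) =
        closedForm θ (m + 1) x * (pairCount x i j / (m + 1)) := by
      intro i j
      by_cases hc : i ≤ j ∧ singleEdge i j ≤ x
      · have hx : x = (x - singleEdge i j) + singleEdge i j := (tsub_add_cancel_of_le hc.2).symm
        rw [if_pos hc, ih, closedForm_mul_stepProb θ m _ hc.1, ← hx]
        · exact symm_of_add_singleEdge (hx ▸ hsym)
        · exact even_of_add_singleEdge (hx ▸ heven)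
        · have := sum_deg_add_singleEdge (x - singleEdge i j) i j
          rw [← hx] at this
          omega
      · rw [if_neg hc, pairCount_eq_zero hsym heven hc, zero_div, mul_zero]
    have hcount : ∑ i, ∑ j, pairCount x i j = m + 1 := by
      have := two_mul_sum_pairCount hsym
      rw [← Nat.cast_sum, hdeg] at this
      push_cast at this
      linarith
    rw [hP.apply_succ, sum_congr rfl fun i _ => sum_congr rfl fun j _ => hterm i j]
    simp only [← mul_sum, ← sum_div, hcount]
    field_simp

end IsGrowthLaw

end

theorem stmt_10 {n : ℕ} (θ : ℝ)
    (P : ℕ → (Fin n → Fin n → ℕ) → ℝ) (hP : IsGrowthLaw θ P)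
    (m : ℕ) (d : Fin n → ℕ) (hd : ∑ i, d i = 2 * m)
    (x : Fin n → Fin n → ℕ) (hsym : ∀ i j, x i j = x j i)
    (heven : ∀ i, Even (x i i)) (hdeg : ∀ i, deg x i = d i) :
    P m x = ((∏ i, riseR θ (d i)) / riseR (n * θ) (2 * m)) *
      (((2 * m)‼ : ℝ) /
        ((∏ i, ∏ j, if i < j then ((x i j)! : ℝ) else 1) * ∏ i, ((x i i)‼ : ℝ))) := by
  obtain rfl : d = deg x := funext fun i => (hdeg i).symm
  exact hP.apply_eq_closedForm m x hsym heven hd
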